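/- Fix κ ∈ ℂ and define f^R(κ,·) : ℂ → ℂ by f^R(κ,λ) := i·e^{-iα}·Ai'(e^{-iα}λ) − κ·Ai(e^{-iα}λ). If λ ∈ ℂ satisfies both f^R(κ,λ) = 0 and ∂f^R/∂λ(κ,λ) = 0, then λ = −κ². In particular, for real κ ≥ 0 every zero λ of f^R(κ,·) with λ ≠ −κ² is a simple zero. -/

import Mathlib

noncomputable section

/-- The Airy function, defined by its entire power series. -/
def Ai (z : ℂ) : ℂ :=
  (((3 : ℝ) ^ (-(2:ℝ)/3) / Real.Gamma (2/3) : ℝ) : ℂ) *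
    ∑' k : ℕ, (∏ j ∈ Finset.range k, ((3*j+1 : ℕ) : ℂ)) * z ^ (3*k) / ((3*k).factorial : ℂ)
  + ((-((3 : ℝ) ^ (-(1:ℝ)/3)) / Real.Gamma (1/3) : ℝ) : ℂ) *
    ∑' k : ℕ, (∏ j ∈ Finset.range k, ((3*j+2 : ℕ) : ℂ)) * z ^ (3*k+1) / ((3*k+1).factorial : ℂ)

/-- The derivative of the Airy function. -/
def Ai' (z : ℂ) : ℂ := deriv Ai z

/-- The angle α = 2π/3. -/
def α : ℝ := 2 * Real.pi / 3

/-- The Robin characteristic function `f^R(κ,λ) = i e^{-iα} Ai'(e^{-iα}λ) − κ Ai(e^{-iα}λ)`. -/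
def fR (κ lam : ℂ) : ℂ :=
  Complex.I * Complex.exp (-(α:ℂ) * Complex.I) * Ai' (Complex.exp (-(α:ℂ) * Complex.I) * lam)
    - κ * Ai (Complex.exp (-(α:ℂ) * Complex.I) * lam)

/-!
Write `ω = e^{-iα}`, so that `ω³ = 1`. Since `Ai'' = z Ai`, differentiating `f^R(κ, ·)` gives
`∂_λ f^R(κ, λ) = i λ Ai(ωλ) - κ ω Ai'(ωλ)`, and eliminating `Ai'(ωλ)` with `f^R(κ, λ) = 0` turns
this into `i (λ + κ²) Ai(ωλ)`. Finally `Ai(ωλ) ≠ 0`: otherwise `f^R(κ, λ) = 0` forces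
`Ai'(ωλ) = 0` as well, and a solution of `w'' = z w` vanishing to second order at a point has all
its derivatives zero there, so it vanishes identically by its Taylor expansion; but `Ai 0 ≠ 0`.
-/

open Finset

lemma summable_of_summable_mul_add {R : Type*} [AddCommGroup R] [TopologicalSpace R]
    [IsTopologicalAddGroup R] {f : ℕ → R} (N : ℕ) [NeZero N]
    (h : ∀ j < N, Summable fun m => f (N * m + j)) : Summable f := by
  rw [sum_indicator_mod N f, sum_fn]
  refine summable_sum fun k _ => ?_
  rw [← ZMod.natCast_zmod_val k, summable_indicator_mod_iff_summable]
  exact h _ (ZMod.val_lt k)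

section EntireSeries

variable {𝕜 : Type*} [RCLike 𝕜] {c : ℕ → 𝕜}

lemma add_one_mul_pow_le_two_mul_pow_succ {R : ℝ} (hR : 1 ≤ R) (n : ℕ) :
    ((n : ℝ) + 1) * R ^ n ≤ (2 * R) ^ (n + 1) := by
  have h2 : ((n : ℝ) + 1) ≤ 2 ^ (n + 1) := by exact_mod_cast (Nat.lt_two_pow_self).le
  have hR' : R ^ n ≤ R ^ (n + 1) := pow_le_pow_right₀ hR n.le_succ
  rw [mul_pow]
  exact mul_le_mul h2 hR' (by positivity) (by positivity)

lemma summable_norm_add_one_mul_coeff_succ_mul_pow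
    (hc : ∀ z : 𝕜, Summable fun n => ‖c n * z ^ n‖) (z : 𝕜) :
    Summable fun n : ℕ => ‖((n : 𝕜) + 1) * c (n + 1) * z ^ n‖ := by
  set R := ‖z‖ + 1
  have hR : 1 ≤ R := by simp [R]
  have h := (summable_nat_add_iff 1).mpr (hc ((2 * R : ℝ) : 𝕜))
  refine h.of_nonneg_of_le (fun _ => norm_nonneg _) fun n => ?_
  have hz : ‖z‖ ^ n ≤ R ^ n := pow_le_pow_left₀ (norm_nonneg z) (by simp [R]) n
  calc ‖((n : 𝕜) + 1) * c (n + 1) * z ^ n‖ = ‖c (n + 1)‖ * (((n : ℝ) + 1) * ‖z‖ ^ n) := by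
        rw [norm_mul, norm_mul, norm_pow, show ((n : 𝕜) + 1) = ((n + 1 : ℕ) : 𝕜) by push_cast; rfl,
          RCLike.norm_natCast]
        push_cast; ring
    _ ≤ ‖c (n + 1)‖ * (2 * R) ^ (n + 1) := by
        gcongr
        exact (mul_le_mul_of_nonneg_left hz (by positivity)).trans
          (add_one_mul_pow_le_two_mul_pow_succ hR n)
    _ = ‖c (n + 1) * ((2 * R : ℝ) : 𝕜) ^ (n + 1)‖ := by
        rw [norm_mul, norm_pow, RCLike.norm_ofReal, abs_of_pos (by positivity)]

theorem hasDerivAt_tsum_coeff_mul_pow (hc : ∀ z : 𝕜, Summable fun n => ‖c n * z ^ n‖) (z : 𝕜) :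
    HasDerivAt (fun z => ∑' n, c n * z ^ n) (∑' n : ℕ, ((n : 𝕜) + 1) * c (n + 1) * z ^ n) z := by
  set R := ‖z‖ + 1
  have hR : 1 ≤ R := by simp [R]
  have hderiv : ∀ n y, y ∈ Metric.ball (0 : 𝕜) R →
      HasDerivAt (fun z => c n * z ^ n) (c n * ((n : 𝕜) * y ^ (n - 1))) y :=
    fun n y _ => (hasDerivAt_pow n y).const_mul (c n)
  have hbound : ∀ n y, y ∈ Metric.ball (0 : 𝕜) R →
      ‖c n * ((n : 𝕜) * y ^ (n - 1))‖ ≤ ‖c n * ((2 * R : ℝ) : 𝕜) ^ n‖ := by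
    rintro (_ | n) y hy
    · simp
    have hy : ‖y‖ ^ n ≤ R ^ n :=
      pow_le_pow_left₀ (norm_nonneg y) (by simpa using (mem_ball_zero_iff.mp hy).le) n
    rw [norm_mul, norm_mul, norm_mul, norm_pow, norm_pow, RCLike.norm_natCast, RCLike.norm_ofReal,
      abs_of_pos (by positivity), Nat.add_sub_cancel]
    gcongr
    push_cast
    exact (mul_le_mul_of_nonneg_left hy (by positivity)).trans
      (add_one_mul_pow_le_two_mul_pow_succ hR n)
  have h := hasDerivAt_tsum_of_isPreconnected (hc _) Metric.isOpen_ball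
    (convex_ball 0 R).isPreconnected hderiv hbound (Metric.mem_ball_self (by positivity))
    (by simpa using (hc 0).of_norm) (show z ∈ Metric.ball 0 R by simp [R])
  refine h.congr_deriv ?_
  rw [tsum_eq_zero_add']
  · simp only [CharP.cast_eq_zero, zero_mul, mul_zero, zero_add, Nat.cast_add, Nat.cast_one,
      Nat.add_sub_cancel]
    exact tsum_congr fun n => by ring
  · exact (summable_norm_add_one_mul_coeff_succ_mul_pow hc z).of_norm.congr fun n => by
      simp only [Nat.cast_add, Nat.cast_one, add_tsub_cancel_right]; ring

end EntireSeries

section SecondOrderLinear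

variable {f q : ℂ → ℂ}

theorem iteratedDeriv_eq_zero_of_deriv_deriv_eq_mul (hf : Differentiable ℂ f)
    (hq : Differentiable ℂ q) (hfq : ∀ z, deriv (deriv f) z = q z * f z) {w : ℂ} (h₀ : f w = 0)
    (h₁ : deriv f w = 0) (n : ℕ) : iteratedDeriv n f w = 0 := by
  induction n using Nat.strong_induction_on with
  | _ n ih =>
    match n, ih with
    | 0, _ => simpa using h₀
    | 1, _ => simpa using h₁
    | m + 2, ih =>
      -- each term of the Leibniz expansion of `(q f)^(m)` contains a derivative of `f` of order ≤ m
      rw [iteratedDeriv_succ', iteratedDeriv_succ', show deriv (deriv f) = q * f from funext hfq,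
        iteratedDeriv_mul hq.contDiff.contDiffAt hf.contDiff.contDiffAt]
      exact Finset.sum_eq_zero fun i _ => by rw [ih (m - i) (by omega), mul_zero]

theorem eq_zero_of_deriv_deriv_eq_mul (hf : Differentiable ℂ f) (hq : Differentiable ℂ q)
    (hfq : ∀ z, deriv (deriv f) z = q z * f z) {w : ℂ} (h₀ : f w = 0) (h₁ : deriv f w = 0) :
    f = 0 := by
  funext z
  rw [← Complex.taylorSeries_eq_of_entire' w z hf]
  simp [iteratedDeriv_eq_zero_of_deriv_deriv_eq_mul hf hq hfq h₀ h₁]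

end SecondOrderLinear

section Airy

/-- Taylor coefficients at `0` of the solution of `w'' = z w` with `w 0 = a`, `w' 0 = b`:
comparing coefficients of `z ^ (n + 1)` in `w'' = z w` gives the recurrence, and those of `z ^ 0`
give `c 2 = 0`. -/
def airyCoeff (a b : ℂ) : ℕ → ℂ
  | 0 => a
  | 1 => b
  | 2 => 0
  | n + 3 => airyCoeff a b n / (((n : ℂ) + 2) * ((n : ℂ) + 3))

def airy (a b z : ℂ) : ℂ := ∑' n, airyCoeff a b n * z ^ n

variable {a b : ℂ}

lemma add_two_mul_add_three_mul_airyCoeff (n : ℕ) :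
    ((n : ℂ) + 2) * ((n : ℂ) + 3) * airyCoeff a b (n + 3) = airyCoeff a b n := by
  rw [airyCoeff, mul_div_cancel₀ _ (by norm_cast)]

lemma norm_airyCoeff_three_mul_add_le (j m : ℕ) :
    ‖airyCoeff a b (3 * m + j)‖ ≤ ‖airyCoeff a b j‖ / m.factorial := by
  induction m with
  | zero => simp
  | succ m ih =>
    set n := 3 * m + j
    have hden : (m : ℝ) + 1 ≤ ‖((n : ℂ) + 2) * ((n : ℂ) + 3)‖ := by
      rw [show ((n : ℂ) + 2) * ((n : ℂ) + 3) = (((n + 2) * (n + 3) : ℕ) : ℂ) by push_cast; ring,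
        Complex.norm_natCast]
      have hmn : (m : ℝ) ≤ n := by exact_mod_cast (show m ≤ n by omega)
      push_cast
      nlinarith
    rw [show 3 * (m + 1) + j = n + 3 by ring, airyCoeff, norm_div]
    calc ‖airyCoeff a b n‖ / ‖((n : ℂ) + 2) * ((n : ℂ) + 3)‖
        ≤ ‖airyCoeff a b n‖ / ((m : ℝ) + 1) :=
          div_le_div_of_nonneg_left (norm_nonneg _) (by positivity) hden
      _ ≤ ‖airyCoeff a b j‖ / m.factorial / ((m : ℝ) + 1) := by gcongr
      _ = ‖airyCoeff a b j‖ / (m + 1).factorial := by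
          rw [Nat.factorial_succ, Nat.cast_mul, div_div, mul_comm]
          push_cast
          ring

lemma summable_norm_airyCoeff_mul_pow (z : ℂ) :
    Summable fun n => ‖airyCoeff a b n * z ^ n‖ := by
  refine summable_of_summable_mul_add 3 fun j _ => ?_
  refine ((Real.summable_pow_div_factorial (‖z‖ ^ 3)).mul_left
    (‖airyCoeff a b j‖ * ‖z‖ ^ j)).of_nonneg_of_le (fun _ => norm_nonneg _) fun m => ?_
  calc ‖airyCoeff a b (3 * m + j) * z ^ (3 * m + j)‖
        = ‖airyCoeff a b (3 * m + j)‖ * (‖z‖ ^ j * (‖z‖ ^ 3) ^ m) := by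
          rw [norm_mul, norm_pow]; ring
    _ ≤ ‖airyCoeff a b j‖ / m.factorial * (‖z‖ ^ j * (‖z‖ ^ 3) ^ m) := by
        gcongr; exact norm_airyCoeff_three_mul_add_le j m
    _ = _ := by ring

lemma airyCoeff_three_mul (m : ℕ) :
    airyCoeff a b (3 * m) = a * (∏ j ∈ range m, ((3 * j + 1 : ℕ) : ℂ)) / (3 * m).factorial := by
  induction m with
  | zero => simp [airyCoeff]
  | succ m ih =>
    rw [show 3 * (m + 1) = 3 * m + 2 + 1 by ring, Nat.factorial_succ, Nat.factorial_succ,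
      Nat.factorial_succ, airyCoeff, ih, prod_range_succ]
    rw [div_div, div_eq_div_iff (by norm_cast; positivity) (by norm_cast; positivity)]
    push_cast
    ring

lemma airyCoeff_three_mul_add_one (m : ℕ) :
    airyCoeff a b (3 * m + 1) =
      b * (∏ j ∈ range m, ((3 * j + 2 : ℕ) : ℂ)) / (3 * m + 1).factorial := by
  induction m with
  | zero => simp [airyCoeff]
  | succ m ih =>
    rw [show 3 * (m + 1) + 1 = 3 * m + 1 + 2 + 1 by ring, Nat.factorial_succ, Nat.factorial_succ,
      Nat.factorial_succ, airyCoeff, ih, prod_range_succ]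
    rw [div_div, div_eq_div_iff (by norm_cast; positivity) (by norm_cast; positivity)]
    push_cast
    ring

lemma airyCoeff_three_mul_add_two (m : ℕ) : airyCoeff a b (3 * m + 2) = 0 := by
  induction m with
  | zero => rfl
  | succ m ih => rw [show 3 * (m + 1) + 2 = 3 * m + 2 + 3 by ring, airyCoeff, ih, zero_div]

theorem Ai_eq_airy : Ai = airy (((3 : ℝ) ^ (-(2 : ℝ) / 3) / Real.Gamma (2 / 3) : ℝ) : ℂ)
    ((-((3 : ℝ) ^ (-(1 : ℝ) / 3)) / Real.Gamma (1 / 3) : ℝ) : ℂ) := by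
  funext z
  set A : ℂ := (((3 : ℝ) ^ (-(2 : ℝ) / 3) / Real.Gamma (2 / 3) : ℝ) : ℂ)
  set B : ℂ := ((-((3 : ℝ) ^ (-(1 : ℝ) / 3)) / Real.Gamma (1 / 3) : ℝ) : ℂ)
  have h₀ : ∑' m, airyCoeff A B (0 + 3 * m) * z ^ (0 + 3 * m) = A * ∑' k : ℕ,
      (∏ j ∈ range k, ((3 * j + 1 : ℕ) : ℂ)) * z ^ (3 * k) / ((3 * k).factorial : ℂ) := by
    rw [← tsum_mul_left]
    exact tsum_congr fun m => by rw [zero_add, airyCoeff_three_mul]; ring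
  have h₁ : ∑' m, airyCoeff A B (1 + 3 * m) * z ^ (1 + 3 * m) = B * ∑' k : ℕ,
      (∏ j ∈ range k, ((3 * j + 2 : ℕ) : ℂ)) * z ^ (3 * k + 1) / ((3 * k + 1).factorial : ℂ) := by
    rw [← tsum_mul_left]
    exact tsum_congr fun m => by rw [add_comm 1, airyCoeff_three_mul_add_one]; ring
  have h₂ : ∑' m, airyCoeff A B (2 + 3 * m) * z ^ (2 + 3 * m) = 0 := by
    simp [add_comm 2, airyCoeff_three_mul_add_two]
  calc Ai z = (∑' m, airyCoeff A B (0 + 3 * m) * z ^ (0 + 3 * m))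
        + (∑' m, airyCoeff A B (1 + 3 * m) * z ^ (1 + 3 * m))
        + ∑' m, airyCoeff A B (2 + 3 * m) * z ^ (2 + 3 * m) := by rw [h₀, h₁, h₂, add_zero]; rfl
    _ = airy A B z := by
      rw [airy, Nat.sumByResidueClasses (summable_norm_airyCoeff_mul_pow z).of_norm 3]
      exact Eq.symm (Fin.sum_univ_three _)

lemma airy_zero : airy a b 0 = a := by
  rw [airy, tsum_eq_single 0 fun n hn => by rw [zero_pow hn, mul_zero]]
  simp [airyCoeff]

lemma hasDerivAt_airy (z : ℂ) :
    HasDerivAt (airy a b) (∑' n : ℕ, ((n : ℂ) + 1) * airyCoeff a b (n + 1) * z ^ n) z :=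
  hasDerivAt_tsum_coeff_mul_pow summable_norm_airyCoeff_mul_pow z

lemma differentiable_airy : Differentiable ℂ (airy a b) :=
  fun z => (hasDerivAt_airy z).differentiableAt

theorem deriv_deriv_airy (z : ℂ) : deriv (deriv (airy a b)) z = z * airy a b z := by
  have h₁ : deriv (airy a b) = fun z => ∑' n : ℕ, ((n : ℂ) + 1) * airyCoeff a b (n + 1) * z ^ n :=
    funext fun z => (hasDerivAt_airy z).deriv
  have hc' := summable_norm_add_one_mul_coeff_succ_mul_pow
    (summable_norm_airyCoeff_mul_pow (a := a) (b := b))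
  have hs := summable_norm_add_one_mul_coeff_succ_mul_pow hc' z
  rw [h₁, (hasDerivAt_tsum_coeff_mul_pow hc' z).deriv,
    tsum_eq_zero_add' ((summable_nat_add_iff 1).mpr hs.of_norm)]
  have hterm (n : ℕ) : ((n + 1 : ℕ) + 1 : ℂ) *
      (((n + 1 + 1 : ℕ) + 1 : ℂ) * airyCoeff a b (n + 1 + 1 + 1)) * z ^ (n + 1) =
        z * (airyCoeff a b n * z ^ n) := by
    rw [← add_two_mul_add_three_mul_airyCoeff n]
    push_cast
    ring
  rw [tsum_congr hterm, tsum_mul_left, airy, show airyCoeff a b (0 + 1 + 1) = 0 from rfl]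
  simp

lemma differentiable_Ai : Differentiable ℂ Ai := Ai_eq_airy ▸ differentiable_airy

lemma hasDerivAt_Ai (z : ℂ) : HasDerivAt Ai (Ai' z) z :=
  (differentiable_Ai z).hasDerivAt

lemma hasDerivAt_Ai' (z : ℂ) : HasDerivAt Ai' (z * Ai z) z := by
  have h := (differentiable_Ai.deriv z).hasDerivAt
  rwa [Ai_eq_airy, deriv_deriv_airy, ← Ai_eq_airy] at h

lemma Ai_zero_ne_zero : Ai 0 ≠ 0 := by
  rw [Ai_eq_airy, airy_zero, Complex.ofReal_ne_zero]
  have := Real.Gamma_pos_of_pos (show (0 : ℝ) < 2 / 3 by norm_num)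
  positivity

theorem Ai'_ne_zero_of_Ai_eq_zero {w : ℂ} (h : Ai w = 0) : Ai' w ≠ 0 := fun h' =>
  Ai_zero_ne_zero <| congrFun (eq_zero_of_deriv_deriv_eq_mul differentiable_Ai differentiable_id
    (fun z => (hasDerivAt_Ai' z).deriv) h h') 0

end Airy

open Complex

lemma exp_neg_α_mul_I_pow_three : exp (-(α : ℂ) * I) ^ 3 = 1 := by
  rw [← exp_nat_mul, ← exp_int_mul_two_pi_mul_I (-1)]
  congr 1
  simp only [α]
  push_cast
  ring

lemma hasDerivAt_fR (κ lam : ℂ) :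
    HasDerivAt (fR κ) (I * lam * Ai (exp (-(α : ℂ) * I) * lam)
      - κ * exp (-(α : ℂ) * I) * Ai' (exp (-(α : ℂ) * I) * lam)) lam := by
  set ω := exp (-(α : ℂ) * I)
  have hω : HasDerivAt (fun l => ω * l) ω lam := by simpa using (hasDerivAt_id lam).const_mul ω
  refine (((hasDerivAt_Ai' (ω * lam)).comp lam hω).const_mul (I * ω) |>.sub
    (((hasDerivAt_Ai (ω * lam)).comp lam hω).const_mul κ)).congr_deriv ?_
  linear_combination I * lam * Ai (ω * lam) * exp_neg_α_mul_I_pow_three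

theorem eq_neg_sq_of_fR_eq_zero_of_deriv_eq_zero {κ lam : ℂ} (hf : fR κ lam = 0)
    (hd : deriv (fR κ) lam = 0) : lam = -κ ^ 2 := by
  rw [(hasDerivAt_fR κ lam).deriv] at hd
  set ω := exp (-(α : ℂ) * I)
  replace hf : I * ω * Ai' (ω * lam) - κ * Ai (ω * lam) = 0 := hf
  have hAi : Ai (ω * lam) ≠ 0 := fun h₀ => Ai'_ne_zero_of_Ai_eq_zero h₀ <| by
    rw [h₀, mul_zero, sub_zero] at hf
    exact (mul_eq_zero.mp hf).resolve_left (mul_ne_zero I_ne_zero (exp_ne_zero _))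
  have key : I * (lam + κ ^ 2) * Ai (ω * lam) = 0 := by
    linear_combination hd - I * κ * hf + κ * ω * Ai' (ω * lam) * I_sq
  have hsum : lam + κ ^ 2 = 0 :=
    (mul_eq_zero.mp ((mul_eq_zero.mp key).resolve_right hAi)).resolve_left I_ne_zero
  linear_combination hsum

/-- If `λ` is a common zero of `f^R(κ,·)` and its derivative, then `λ = −κ²`.
In particular, for real `κ ≥ 0`, every zero `λ ≠ −κ²` of `f^R(κ,·)` is simple. -/
theorem robin_zeros_simple (κ : ℂ) :
    (∀ lam : ℂ, fR κ lam = 0 → deriv (fR κ) lam = 0 → lam = -κ ^ 2) ∧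
    (∀ κ' : ℝ, 0 ≤ κ' → ∀ lam : ℂ, fR (κ' : ℂ) lam = 0 → lam ≠ -(κ' : ℂ) ^ 2 →
      deriv (fR (κ' : ℂ)) lam ≠ 0) :=
  ⟨fun _ => eq_neg_sq_of_fR_eq_zero_of_deriv_eq_zero,
    fun _ _ _ hf hne hd => hne (eq_neg_sq_of_fR_eq_zero_of_deriv_eq_zero hf hd)⟩

end
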